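/- The formula R_Ann p is not semantically equivalent to any formula of the language Φ that does not use the modality R; that is, for every formula φ built only from the propositional variable p, negation, disjunction, and the modalities @_n and D_n, there exists an epistemic model with extensions in which the truth set of R_Ann p differs from the truth set of φ. -/

import Mathlib

/-- Formulas of the language Φ: φ ::= p | ¬φ | φ∨φ | @ₙφ | Rₙφ | Dₙφ,
where `P` is the type of propositional variables and `N` the type of names. -/
inductive Formula (P N : Type) : Type
  | var : P → Formula P N
  | neg : Formula P N → Formula P N
  | disj : Formula P N → Formula P N → Formula P N
  | at_ : N → Formula P N → Formula P N
  | re : N → Formula P N → Formula P N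
  | de : N → Formula P N → Formula P N

/-- An epistemic model with extensions. -/
structure Model (P N : Type) where
  W : Type
  A : Type
  sim : A → W → W → Prop
  sim_equiv : ∀ a, Equivalence (sim a)
  ext : W → N → A
  val : P → Set (W × A)

/-- The satisfaction relation `w, a ⊨ φ`. -/
def Model.sat {P N : Type} (M : Model P N) : Formula P N → M.W → M.A → Prop
  | .var p, w, a => (w, a) ∈ M.val p
  | .neg φ, w, a => ¬ M.sat φ w a
  | .disj φ ψ, w, a => M.sat φ w a ∨ M.sat ψ w a
  | .at_ n φ, w, _ => M.sat φ w (M.ext w n)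
  | .re n φ, w, a => ∀ u, M.sim a w u → M.sat φ u (M.ext w n)
  | .de n φ, w, a => ∀ u, M.sim a w u → M.sat φ u (M.ext u n)

/-- The truth set ⟦φ⟧ of a formula. -/
def Model.truthSet {P N : Type} (M : Model P N) (φ : Formula P N) : Set (M.W × M.A) :=
  {x | M.sat φ x.1 x.2}

/-- A formula does not use the modality R. -/
def Formula.noRe {P N : Type} : Formula P N → Prop
  | .var _ => True
  | .neg φ => φ.noRe
  | .disj φ ψ => φ.noRe ∧ ψ.noRe
  | .at_ _ φ => φ.noRe
  | .re _ _ => False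
  | .de _ φ => φ.noRe

/-! A two-world, two-agent model with total indistinguishability, in which every agent is named by
the world it lives in (`e_w(n) = w`), and `p` fails only at the point `(true, false)`.
Outside that point every R-free formula has constant truth value: `@_n` and `D_n` only ever look
at diagonal points `(u, u)`. But `R_n p` at `(w, a)` evaluates `p` at the points `(u, w)`, so it
reaches the defect from `(false, false)` and not from `(true, true)`. -/

def countermodel : Model Unit Unit where
  W := Bool
  A := Bool
  sim := fun _ _ _ => True
  sim_equiv := fun _ => ⟨fun _ => trivial, fun _ => trivial, fun _ _ => trivial⟩
  ext := fun w _ => w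
  val := fun _ => {x | x ≠ (true, false)}

namespace countermodel

lemma sat_var_iff (w a : Bool) : countermodel.sat (.var ()) w a ↔ (w, a) ≠ (true, false) :=
  Iff.rfl

lemma sat_iff_sat_true_true {φ : Formula Unit Unit} (h : φ.noRe) {w a : Bool}
    (hwa : (w, a) ≠ (true, false)) :
    countermodel.sat φ w a ↔ countermodel.sat φ true true := by
  induction φ generalizing w a with
  | var => exact iff_of_true hwa ((sat_var_iff true true).mpr (by simp))
  | neg ψ ih => exact not_congr (ih h hwa)
  | disj ψ χ ihψ ihχ => exact or_congr (ihψ h.1 hwa) (ihχ h.2 hwa)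
  | at_ n ψ ih =>
    have hww : (w, w) ≠ (true, false) := by cases w <;> simp
    exact ih h hww
  | re => exact h.elim
  | de => exact Iff.rfl

lemma sat_re_var_iff (w a : Bool) :
    countermodel.sat (.re () (.var ())) w a ↔ w = true := by
  change (∀ u : Bool, True → countermodel.sat (.var ()) u w) ↔ w = true
  cases w <;> simp [sat_var_iff]

end countermodel

/-- R_Ann p is not semantically equivalent to any formula that
does not use the modality R: for every such formula φ there is an epistemic
model with extensions in which ⟦R_Ann p⟧ ≠ ⟦φ⟧. -/
theorem re_undefinable_via_de_at (φ : Formula Unit Unit) (h : φ.noRe) :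
    ∃ M : Model Unit Unit, M.truthSet (.re () (.var ())) ≠ M.truthSet φ := by
  refine ⟨countermodel, fun heq => ?_⟩
  have hsat (w a : Bool) : countermodel.sat φ w a ↔ w = true := by
    rw [← countermodel.sat_re_var_iff w a]
    exact (Set.ext_iff.mp heq (w, a)).symm
  have hff : countermodel.sat φ false false :=
    (countermodel.sat_iff_sat_true_true h (by simp)).mpr ((hsat true true).mpr rfl)
  exact Bool.false_ne_true ((hsat false false).mp hff)
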